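/- Let ℓ, λ ∈ ℝ and let κ : ℝ → ℝ be a smooth solution of the stationary equation κ''' + 2ℓκ' − 6κκ' = 0. Define the matrix functions 𝒦_λ(s) := [[0, κ(s)+λ],[1, 0]] and 𝒫_λ(s) := [[−κ'(s), −κ''(s) + 2κ(s)² − 2λκ(s) − 4λ²],[2κ(s) − 4λ, κ'(s)]]. If F : ℝ → M₂(ℝ) is a smooth map with F(s) invertible for all s and F' = F·𝒦_λ, then the map s ↦ F(s)·(𝒫_λ(s) − 2ℓ·𝒦_λ(s))·F(s)⁻¹ is constant (a conservation law along stationary curves). -/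

import Mathlib

noncomputable section

open Matrix

attribute [local instance] Matrix.normedAddCommGroup Matrix.normedSpace

/-- The space of 2×2 real matrices. -/
abbrev M2 : Type := Matrix (Fin 2) (Fin 2) ℝ

/-- The matrix `𝒦_λ(s) = [[0, κ(s)+λ],[1, 0]]`. -/
def KL (κ : ℝ → ℝ) (l s : ℝ) : M2 := !![0, κ s + l; 1, 0]

/-- The matrix `𝒫_λ(s) = [[−κ', −κ'' + 2κ² − 2λκ − 4λ²],[2κ − 4λ, κ']]`. -/
def PL (κ : ℝ → ℝ) (l s : ℝ) : M2 :=
  !![-(deriv κ s), -(deriv (deriv κ) s) + 2 * (κ s) ^ 2 - 2 * l * κ s - 4 * l ^ 2;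
     2 * κ s - 4 * l, deriv κ s]

private lemma constAux {f : ℝ → ℝ} (h : ∀ s, HasDerivAt f 0 s) (s₁ s₂ : ℝ) : f s₁ = f s₂ :=
  is_const_of_deriv_eq_zero (fun s => (h s).differentiableAt) (fun s => (h s).deriv) s₁ s₂

private lemma detAux {κ x y u v : ℝ → ℝ} {lam : ℝ}
    (hx : ∀ s, HasDerivAt x (y s) s)
    (hy : ∀ s, HasDerivAt y ((κ s + lam) * x s) s)
    (hu : ∀ s, HasDerivAt u (v s) s)
    (hv : ∀ s, HasDerivAt v ((κ s + lam) * u s) s)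
    (s₁ s₂ : ℝ) :
    x s₁ * v s₁ - y s₁ * u s₁ = x s₂ * v s₂ - y s₂ * u s₂ := by
  apply constAux (fun s => ?_) s₁ s₂
  have h := ((hx s).mul (hv s)).sub ((hy s).mul (hu s))
  refine h.congr_deriv ?_
  ring

private lemma entryAux {l lam : ℝ} {κ x y u v : ℝ → ℝ}
    (hκ1 : ∀ s, HasDerivAt κ (deriv κ s) s)
    (hκ2 : ∀ s, HasDerivAt (deriv κ) (deriv (deriv κ) s) s)
    (hκ3 : ∀ s, HasDerivAt (deriv (deriv κ))
      (6 * κ s * deriv κ s - 2 * l * deriv κ s) s)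
    (hx : ∀ s, HasDerivAt x (y s) s)
    (hy : ∀ s, HasDerivAt y ((κ s + lam) * x s) s)
    (hu : ∀ s, HasDerivAt u (v s) s)
    (hv : ∀ s, HasDerivAt v ((κ s + lam) * u s) s)
    (s₁ s₂ : ℝ) :
    (x s₁ * (-(deriv (deriv κ) s₁) + 2 * κ s₁ ^ 2 - 2 * lam * κ s₁ - 4 * lam ^ 2
        - 2 * l * (κ s₁ + lam)) + y s₁ * deriv κ s₁) * u s₁
      - (x s₁ * (-(deriv κ s₁)) + y s₁ * (2 * κ s₁ - 4 * lam - 2 * l)) * v s₁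
    = (x s₂ * (-(deriv (deriv κ) s₂) + 2 * κ s₂ ^ 2 - 2 * lam * κ s₂ - 4 * lam ^ 2
        - 2 * l * (κ s₂ + lam)) + y s₂ * deriv κ s₂) * u s₂
      - (x s₂ * (-(deriv κ s₂)) + y s₂ * (2 * κ s₂ - 4 * lam - 2 * l)) * v s₂ := by
  apply constAux (fun s => ?_) s₁ s₂
  have hq := ((((hκ3 s).neg.add (((hκ1 s).pow 2).const_mul 2)).sub
      ((hκ1 s).const_mul (2 * lam))).sub_const (4 * lam ^ 2)).sub
      (((hκ1 s).add_const lam).const_mul (2 * l))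
  have hr : HasDerivAt (fun t => 2 * κ t - 4 * lam - 2 * l) (2 * deriv κ s) s :=
    (((hκ1 s).const_mul 2).sub_const (4 * lam)).sub_const (2 * l)
  have hA := ((hx s).mul hq).add ((hy s).mul (hκ2 s))
  have hB := ((hx s).mul (hκ2 s).neg).add ((hy s).mul hr)
  have h := (hA.mul (hu s)).sub (hB.mul (hv s))
  refine h.congr_deriv ?_
  simp only [Pi.mul_apply, Pi.add_apply, Pi.sub_apply, Pi.neg_apply, Pi.pow_apply]
  ring

/-- If `κ` is a smooth solution of the stationary equation
`κ''' + 2ℓκ' − 6κκ' = 0` and `F : ℝ → M₂(ℝ)` is a smooth pointwise-invertible solution of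
`F' = F·𝒦_λ`, then `s ↦ F(s)·(𝒫_λ(s) − 2ℓ·𝒦_λ(s))·F(s)⁻¹` is constant. -/
theorem stmt15 (l lam : ℝ) (κ : ℝ → ℝ) (hκ : ContDiff ℝ (⊤ : ℕ∞) κ)
    (hstat : ∀ s : ℝ,
      deriv (deriv (deriv κ)) s + 2 * l * deriv κ s - 6 * κ s * deriv κ s = 0)
    (F : ℝ → M2) (hF : ContDiff ℝ (⊤ : ℕ∞) F)
    (hinv : ∀ s : ℝ, IsUnit (F s))
    (hode : ∀ s : ℝ, deriv F s = F s * KL κ lam s) :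
    ∀ s₁ s₂ : ℝ,
      F s₁ * (PL κ lam s₁ - (2 * l) • KL κ lam s₁) * (F s₁)⁻¹ =
        F s₂ * (PL κ lam s₂ - (2 * l) • KL κ lam s₂) * (F s₂)⁻¹ := by
  intro s₁ s₂
  -- derivatives of κ
  have hκ' : ContDiff ℝ (↑(⊤ : ℕ∞)) κ := hκ.of_le (by simp)
  have hκd : ContDiff ℝ (↑(⊤ : ℕ∞)) (deriv κ) := (contDiff_infty_iff_deriv.mp hκ').2
  have hκdd : ContDiff ℝ (↑(⊤ : ℕ∞)) (deriv (deriv κ)) := (contDiff_infty_iff_deriv.mp hκd).2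
  have hκ1 : ∀ s, HasDerivAt κ (deriv κ s) s :=
    fun s => (hκ'.differentiable (by simp) s).hasDerivAt
  have hκ2 : ∀ s, HasDerivAt (deriv κ) (deriv (deriv κ) s) s :=
    fun s => (hκd.differentiable (by simp) s).hasDerivAt
  have hκ3 : ∀ s, HasDerivAt (deriv (deriv κ))
      (6 * κ s * deriv κ s - 2 * l * deriv κ s) s := by
    intro s
    have h := (hκdd.differentiable (by simp) s).hasDerivAt
    refine h.congr_deriv ?_
    have := hstat s
    linarith
  -- entrywise derivatives of F
  have hF' : ∀ s, HasDerivAt F (F s * KL κ lam s) s := by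
    intro s
    have h := (hF.differentiable (by simp) s).hasDerivAt
    rw [← hode s]; exact h
  have hent : ∀ (i j : Fin 2) (s : ℝ),
      HasDerivAt (fun t => F t i j) ((F s * KL κ lam s) i j) s := by
    intro i j s
    exact ((ContinuousLinearMap.proj (R := ℝ) (φ := fun _ : Fin 2 => ℝ)
        j).hasFDerivAt.comp_hasDerivAt s
      ((ContinuousLinearMap.proj (R := ℝ) (φ := fun _ : Fin 2 => Fin 2 → ℝ)
        i).hasFDerivAt.comp_hasDerivAt s (hF' s)))
  have hx : ∀ s, HasDerivAt (fun t => F t 0 0) (F s 0 1) s := by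
    intro s
    simpa [KL, Matrix.mul_apply, Fin.sum_univ_two] using hent 0 0 s
  have hy : ∀ s, HasDerivAt (fun t => F t 0 1) ((κ s + lam) * F s 0 0) s := by
    intro s
    simpa [KL, Matrix.mul_apply, Fin.sum_univ_two, mul_comm] using hent 0 1 s
  have hu : ∀ s, HasDerivAt (fun t => F t 1 0) (F s 1 1) s := by
    intro s
    simpa [KL, Matrix.mul_apply, Fin.sum_univ_two] using hent 1 0 s
  have hv : ∀ s, HasDerivAt (fun t => F t 1 1) ((κ s + lam) * F s 1 0) s := by
    intro s
    simpa [KL, Matrix.mul_apply, Fin.sum_univ_two, mul_comm] using hent 1 1 s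
  -- det F is constant
  have hdet : (F s₂).det = (F s₁).det := by
    rw [Matrix.det_fin_two, Matrix.det_fin_two]
    exact detAux hx hy hu hv s₂ s₁
  -- the four constant entries
  have h01 := entryAux hκ1 hκ2 hκ3 hx hy hx hy s₁ s₂
  have h00 := entryAux hκ1 hκ2 hκ3 hx hy hu hv s₁ s₂
  have h11 := entryAux hκ1 hκ2 hκ3 hu hv hx hy s₁ s₂
  have h10 := entryAux hκ1 hκ2 hκ3 hu hv hu hv s₁ s₂
  -- assemble
  rw [Matrix.inv_def, Matrix.inv_def, hdet, mul_smul_comm, mul_smul_comm]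
  congr 1
  ext i j
  rw [Matrix.adjugate_fin_two, Matrix.adjugate_fin_two]
  fin_cases i <;> fin_cases j <;>
    simp [PL, KL, Matrix.mul_apply, Fin.sum_univ_two, Matrix.sub_apply,
      Matrix.smul_apply, smul_eq_mul]
  · linear_combination -h00
  · linear_combination h01
  · linear_combination -h10
  · linear_combination h11
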